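/- If every structure in the multiverse has an infinitely generic extension, then every infinitely generic structure N is existentially complete in the multiverse: every Σ₁-sentence (existential sentence) with parameters in N that holds in some extension N' ≤ N also holds in N. -/

import Mathlib

namespace Robinson

/-- Formulas built from atoms (which may carry parameters), with conjunction,
disjunction, negation and an existential quantifier whose witnesses range over
a fixed type `W` of potential parameters/elements. -/
inductive Frm (atom : Type) (W : Type) : Type
  | atm : atom → Frm atom W
  | and : Frm atom W → Frm atom W → Frm atom W
  | or  : Frm atom W → Frm atom W → Frm atom W
  | not : Frm atom W → Frm atom W
  | ex  : (W → Frm atom W) → Frm atom W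

/-- A multiverse: a preorder of structures, `le Q N` meaning `Q` extends `N`
(`N` is a substructure of `Q`).  `mem a N` says the element `a` belongs to the
domain of `N` (so elements persist to extensions), and atomic sentences with
parameters in `N` are absolute between `N` and its extensions. -/
structure Multiverse (atom : Type) (W : Type) : Type 1 where
  M : Type
  le : M → M → Prop
  le_refl : ∀ N, le N N
  le_trans : ∀ {P Q R}, le P Q → le Q R → le P R
  satAtom : M → atom → Prop
  mem : W → M → Prop
  mem_mono : ∀ {a : W} {N Q : M}, le Q N → mem a N → mem a Q
  atom_absolute : ∀ {N Q : M} (p : atom), le Q N → (satAtom N p ↔ satAtom Q p)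

variable {atom W : Type}

/-- Robinson's infinite forcing relation on the multiverse. -/
def Forces (V : Multiverse atom W) : Frm atom W → V.M → Prop
  | .atm p, N => V.satAtom N p
  | .and φ ψ, N => Forces V φ N ∧ Forces V ψ N
  | .or φ ψ, N => Forces V φ N ∨ Forces V ψ N
  | .not φ, N => ∀ Q : V.M, V.le Q N → ¬ Forces V φ Q
  | .ex f, N => ∃ a : W, V.mem a N ∧ Forces V (f a) N

/-- Tarskian satisfaction. -/
def Sat (V : Multiverse atom W) : Frm atom W → V.M → Prop
  | .atm p, N => V.satAtom N p
  | .and φ ψ, N => Sat V φ N ∧ Sat V ψ N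
  | .or φ ψ, N => Sat V φ N ∨ Sat V ψ N
  | .not φ, N => ¬ Sat V φ N
  | .ex f, N => ∃ a : W, V.mem a N ∧ Sat V (f a) N

/-- `N` is infinitely generic: it forces every sentence or its negation. -/
def Generic (V : Multiverse atom W) (N : V.M) : Prop :=
  ∀ φ : Frm atom W, Forces V φ N ∨ Forces V (Frm.not φ) N

end Robinson


namespace Robinson

variable {atom W : Type}

/-- Quantifier-free formulas. -/
inductive QF : Frm atom W → Prop
  | atm (p : atom) : QF (.atm p)
  | and {φ ψ} : QF φ → QF ψ → QF (.and φ ψ)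
  | or {φ ψ} : QF φ → QF ψ → QF (.or φ ψ)
  | not {φ} : QF φ → QF (.not φ)

/-- Σ₁ (existential) formulas: existential quantifiers over a quantifier-free matrix. -/
inductive Sigma1 : Frm atom W → Prop
  | of_qf {φ} : QF φ → Sigma1 φ
  | ex {f : W → Frm atom W} : (∀ a, Sigma1 (f a)) → Sigma1 (.ex f)

/-- The universal quantifier, as the abbreviation `¬∃x¬`. -/
def Frm.all (f : W → Frm atom W) : Frm atom W :=
  .not (.ex fun a => .not (f a))

/-- Π₂ formulas: universally quantified Σ₁ formulas. -/
inductive Pi2 : Frm atom W → Prop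
  | of_sigma1 {φ} : Sigma1 φ → Pi2 φ
  | all {f : W → Frm atom W} : (∀ a, Pi2 (f a)) → Pi2 (Frm.all f)

end Robinson

/-!
In an infinitely generic structure forcing coincides with truth. If a Σ₁-sentence holds in an
extension of the generic `N`, it persists to a generic extension below it, where it is therefore
forced; then `N` cannot force its negation, so by genericity `N` forces it, hence it is true in `N`.
-/

namespace Robinson

variable {atom W : Type} {V : Multiverse atom W}

theorem QF.sat_iff_of_le {φ : Frm atom W} (hφ : QF φ) {N Q : V.M} (hle : V.le Q N) :
    Sat V φ N ↔ Sat V φ Q := by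
  induction hφ with
  | atm p => exact V.atom_absolute p hle
  | and _ _ ihφ ihψ => exact and_congr ihφ ihψ
  | or _ _ ihφ ihψ => exact or_congr ihφ ihψ
  | not _ ih => exact not_congr ih

theorem Sigma1.sat_of_le {φ : Frm atom W} (hφ : Sigma1 φ) {N Q : V.M} (hle : V.le Q N)
    (h : Sat V φ N) : Sat V φ Q := by
  induction hφ with
  | of_qf hqf => exact (hqf.sat_iff_of_le hle).mp h
  | ex _ ih =>
    obtain ⟨a, ha, hf⟩ := h
    exact ⟨a, V.mem_mono hle ha, ih a hf⟩

theorem Generic.forces_iff_sat {N : V.M} (hg : Generic V N) (φ : Frm atom W) :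
    Forces V φ N ↔ Sat V φ N := by
  induction φ with
  | atm p => exact Iff.rfl
  | and φ ψ ihφ ihψ => exact and_congr ihφ ihψ
  | or φ ψ ihφ ihψ => exact or_congr ihφ ihψ
  | not φ ih =>
    refine ⟨fun h hsat => h N (V.le_refl N) (ih.mpr hsat), fun h => ?_⟩
    exact (hg φ).resolve_left (mt ih.mp h)
  | ex f ih => exact exists_congr fun a => and_congr_right fun _ => ih a

theorem Generic.forces_of_le {N Q : V.M} (hg : Generic V N) {φ : Frm atom W}
    (hle : V.le Q N) (hQ : Forces V φ Q) : Forces V φ N :=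
  (hg φ).resolve_right fun hnot => hnot Q hle hQ

/-- If infinitely generic structures are dense in the multiverse, every infinitely
generic structure is existentially complete in the multiverse. -/
theorem generic_existentially_complete {atom W : Type} (V : Multiverse atom W)
    (hdense : ∀ P : V.M, ∃ Q : V.M, V.le Q P ∧ Generic V Q)
    {N : V.M} (hg : Generic V N)
    (phi : Frm atom W) (hsigma : Sigma1 phi)
    {N' : V.M} (hle : V.le N' N) (h : Sat V phi N') :
    Sat V phi N := by
  obtain ⟨Q, hQN', hQ⟩ := hdense N'
  have hQ_forces : Forces V phi Q := (hQ.forces_iff_sat phi).mpr (hsigma.sat_of_le hQN' h)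
  exact (hg.forces_iff_sat phi).mp (hg.forces_of_le (V.le_trans hQN' hle) hQ_forces)

end Robinson
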